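/- Let M be a totally ordered MV-effect algebra and let B be the Boolean algebra of finite unions of half-open intervals [a,b) = {x ∈ M : a ≤ x < b} of M. Then the map φ sending [a₁,b₁) ∪̇ ⋯ ∪̇ [aₙ,bₙ) (a disjoint union with a₁ < b₁ ≤ a₂ < b₂ ≤ ⋯) to (b₁ ⊖ a₁) ⊕ ⋯ ⊕ (bₙ ⊖ aₙ) is a well-defined surjective morphism of effect algebras from B onto M. -/

import Mathlib

/-- An effect algebra: a partial algebra `(α; ⊕, 0, 1)`.  The partial operation is
encoded by a total function `add` together with a definedness predicate `D`. -/
structure EffectAlgebra (α : Type*) where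
  D : α → α → Prop
  add : α → α → α
  zero : α
  one : α
  comm_def : ∀ a b, D a b → D b a
  comm : ∀ a b, D a b → add a b = add b a
  assoc_def₁ : ∀ a b c, D a b → D (add a b) c → D b c
  assoc_def₂ : ∀ a b c, D a b → D (add a b) c → D a (add b c)
  assoc : ∀ a b c, D a b → D (add a b) c → add (add a b) c = add a (add b c)
  orth_exists : ∀ a, ∃! b, D a b ∧ add a b = one
  add_one : ∀ a, D a one → a = zero

namespace EffectAlgebra

variable {α : Type*}
open Classical

/-- The induced order: `a ≤ b` iff `∃ c, a ⊕ c = b`. -/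
def le (E : EffectAlgebra α) (a b : α) : Prop := ∃ c, E.D a c ∧ E.add a c = b

/-- The orthosupplement `a'`. -/
noncomputable def orth (E : EffectAlgebra α) (a : α) : α := (E.orth_exists a).choose

/-- Partial difference: `sub b a = b ⊖ a`, intended for `a ≤ b`. -/
noncomputable def sub (E : EffectAlgebra α) (b a : α) : α :=
  if h : ∃ c, E.D a c ∧ E.add a c = b then h.choose else E.zero

end EffectAlgebra

namespace EffectAlgebra
variable {α : Type*} (E : EffectAlgebra α)

lemma one_add_zero : E.D E.one E.zero ∧ E.add E.one E.zero = E.one := by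
  obtain ⟨b, ⟨hD, hadd⟩, -⟩ := E.orth_exists E.one
  have hb : b = E.zero := E.add_one b (E.comm_def _ _ hD)
  exact hb ▸ ⟨hD, hadd⟩

lemma D_zero_one : E.D E.zero E.one := E.comm_def _ _ (E.one_add_zero).1

lemma add_zero' (a : α) : E.D a E.zero ∧ E.add a E.zero = a := by
  obtain ⟨a', ⟨hD, h1⟩, -⟩ := E.orth_exists a
  have hD' : E.D a' a := E.comm_def _ _ hD
  have h1' : E.add a' a = E.one := (E.comm _ _ hD) ▸ h1
  have h2 : E.D (E.add a' a) E.zero := by rw [h1']; exact E.one_add_zero.1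
  have h3 : E.D a E.zero := E.assoc_def₁ _ _ _ hD' h2
  have h4 : E.D a' (E.add a E.zero) := E.assoc_def₂ _ _ _ hD' h2
  have h5 : E.add a' (E.add a E.zero) = E.one := by
    rw [← E.assoc _ _ _ hD' h2, h1', E.one_add_zero.2]
  obtain ⟨c, hc, huniq⟩ := E.orth_exists a'
  have e1 : E.add a E.zero = c := huniq _ ⟨h4, h5⟩
  have e2 : a = c := huniq a ⟨hD', h1'⟩
  exact ⟨h3, by rw [e1, e2]⟩

lemma zero_add' (a : α) : E.D E.zero a ∧ E.add E.zero a = a := by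
  have h := E.add_zero' a
  exact ⟨E.comm_def _ _ h.1, by rw [E.comm _ _ (E.comm_def _ _ h.1), h.2]⟩

/-- derived associativity from the right -/
lemma assoc' {a b c : α} (h1 : E.D b c) (h2 : E.D a (E.add b c)) :
    E.D a b ∧ E.D (E.add a b) c ∧ E.add (E.add a b) c = E.add a (E.add b c) := by
  have h3 : E.D (E.add b c) a := E.comm_def _ _ h2
  have h4 : E.D c a := E.assoc_def₁ _ _ _ h1 h3
  have h5 : E.D b (E.add c a) := E.assoc_def₂ _ _ _ h1 h3
  have e1 : E.add (E.add b c) a = E.add b (E.add c a) := E.assoc _ _ _ h1 h3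
  have h6 : E.D (E.add c a) b := E.comm_def _ _ h5
  have h7 : E.D a b := E.assoc_def₁ _ _ _ h4 h6
  have h8 : E.D c (E.add a b) := E.assoc_def₂ _ _ _ h4 h6
  have e2 : E.add (E.add c a) b = E.add c (E.add a b) := E.assoc _ _ _ h4 h6
  refine ⟨h7, E.comm_def _ _ h8, ?_⟩
  rw [E.comm _ _ (E.comm_def _ _ h8), ← e2, E.comm _ _ h6, ← e1, E.comm _ _ h3]

lemma cancel {a b c : α} (hab : E.D a b) (hac : E.D a c)
    (h : E.add a b = E.add a c) : b = c := by
  obtain ⟨d, ⟨hDd, hd⟩, -⟩ := E.orth_exists (E.add a b)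
  have hDd' : E.D (E.add a c) d := h ▸ hDd
  have hd' : E.add (E.add a c) d = E.one := h ▸ hd
  have hbd : E.D b d := E.assoc_def₁ _ _ _ hab hDd
  have hcd : E.D c d := E.assoc_def₁ _ _ _ hac hDd'
  have e1 : E.add a (E.add b d) = E.one := by rw [← E.assoc _ _ _ hab hDd, hd]
  have e2 : E.add a (E.add c d) = E.one := by rw [← E.assoc _ _ _ hac hDd', hd']
  have hD1 : E.D a (E.add b d) := E.assoc_def₂ _ _ _ hab hDd
  have hD2 : E.D a (E.add c d) := E.assoc_def₂ _ _ _ hac hDd'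
  obtain ⟨w, hw, huniq⟩ := E.orth_exists a
  have e3 : E.add b d = E.add c d := by
    rw [huniq _ ⟨hD1, e1⟩, huniq _ ⟨hD2, e2⟩]
  have hkey : ∀ x : α, E.D x d → E.D a (E.add x d) → E.add a (E.add x d) = E.one →
      E.D (E.add d a) x ∧ E.add (E.add d a) x = E.one := by
    intro x hxd hDax hax
    have h3 : E.D (E.add x d) a := E.comm_def _ _ hDax
    have h4 : E.D d a := E.assoc_def₁ _ _ _ hxd h3
    have h5 : E.D x (E.add d a) := E.assoc_def₂ _ _ _ hxd h3
    have e : E.add (E.add x d) a = E.add x (E.add d a) := E.assoc _ _ _ hxd h3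
    refine ⟨E.comm_def _ _ h5, ?_⟩
    rw [E.comm _ _ (E.comm_def _ _ h5), ← e, E.comm _ _ h3, hax]
  have k1 := hkey b hbd hD1 e1
  have k2 := hkey c hcd (e3 ▸ hD1) (e3 ▸ e1)
  obtain ⟨v, hv, huniq2⟩ := E.orth_exists (E.add d a)
  rw [huniq2 _ k1, huniq2 _ k2]

lemma le_refl (a : α) : E.le a a := ⟨E.zero, E.add_zero' a⟩

lemma zero_le (a : α) : E.le E.zero a := ⟨a, E.zero_add' a⟩

lemma le_one (a : α) : E.le a E.one := by
  obtain ⟨b, hb, -⟩ := E.orth_exists a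
  exact ⟨b, hb⟩

lemma le_trans {a b c : α} (h1 : E.le a b) (h2 : E.le b c) : E.le a c := by
  obtain ⟨u, hu, eu⟩ := h1
  obtain ⟨v, hv, ev⟩ := h2
  have hv' : E.D (E.add a u) v := eu ▸ hv
  have h3 : E.D u v := E.assoc_def₁ _ _ _ hu hv'
  have h4 : E.D a (E.add u v) := E.assoc_def₂ _ _ _ hu hv'
  exact ⟨E.add u v, h4, by rw [← E.assoc _ _ _ hu hv', eu, ev]⟩

lemma eq_zero_of_add_eq_zero {a b : α} (hD : E.D a b) (h : E.add a b = E.zero) :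
    a = E.zero ∧ b = E.zero := by
  have h1 : E.D (E.add a b) E.one := by rw [h]; exact E.D_zero_one
  have hb1 : E.D b E.one := E.assoc_def₁ _ _ _ hD h1
  have hb : b = E.zero := E.add_one b hb1
  have ha' : E.D a (E.add b E.one) := E.assoc_def₂ _ _ _ hD h1
  have hbe : E.add b E.one = E.one := by rw [hb, (E.zero_add' E.one).2]
  have ha : a = E.zero := E.add_one a (hbe ▸ ha')
  exact ⟨ha, hb⟩

lemma le_antisymm {a b : α} (h1 : E.le a b) (h2 : E.le b a) : a = b := by
  obtain ⟨u, hu, eu⟩ := h1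
  obtain ⟨v, hv, ev⟩ := h2
  have hv' : E.D (E.add a u) v := eu ▸ hv
  have h3 : E.D u v := E.assoc_def₁ _ _ _ hu hv'
  have h4 : E.D a (E.add u v) := E.assoc_def₂ _ _ _ hu hv'
  have e : E.add a (E.add u v) = a := by rw [← E.assoc _ _ _ hu hv', eu, ev]
  have e0 : E.add a (E.add u v) = E.add a E.zero := by rw [e, (E.add_zero' a).2]
  have huv := E.cancel h4 (E.add_zero' a).1 e0
  have hu0 : u = E.zero := (E.eq_zero_of_add_eq_zero h3 huv).1
  rw [← eu, hu0, (E.add_zero' a).2]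

/-- swap lemma: `x ⊕ (y ⊕ z) = y ⊕ (x ⊕ z)`. -/
lemma swap {x y z : α} (h1 : E.D y z) (h2 : E.D x (E.add y z)) :
    E.D x z ∧ E.D y (E.add x z) ∧ E.add x (E.add y z) = E.add y (E.add x z) := by
  have h1' : E.D z y := E.comm_def _ _ h1
  have h2' : E.D x (E.add z y) := by rwa [E.comm _ _ h1] at h2
  obtain ⟨h3, h4, e⟩ := E.assoc' h1' h2'
  have h5 : E.D y (E.add x z) := E.comm_def _ _ h4
  refine ⟨h3, h5, ?_⟩
  rw [E.comm _ _ h1, ← e, E.comm _ _ h4]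

/-- monotonicity: if `c ≤ a` and `a ⊕ x` is defined then `c ⊕ x` is defined and
`c ⊕ x ≤ a ⊕ x`. -/
lemma D_of_le_of_D {c a x : α} (hca : E.le c a) (hax : E.D a x) :
    E.D c x ∧ E.le (E.add c x) (E.add a x) := by
  obtain ⟨e, he, hee⟩ := hca
  have h1 : E.D (E.add c e) x := hee ▸ hax
  have h2 : E.D e x := E.assoc_def₁ _ _ _ he h1
  have h3 : E.D c (E.add e x) := E.assoc_def₂ _ _ _ he h1
  have e1 : E.add (E.add c e) x = E.add c (E.add e x) := E.assoc _ _ _ he h1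
  obtain ⟨h4, h5, e2⟩ := E.swap h2 h3
  exact ⟨h4, ⟨e, E.comm_def _ _ h5,
    by rw [E.comm _ _ (E.comm_def _ _ h5), ← e2, ← e1, hee]⟩⟩

lemma sub_spec {a b : α} (h : E.le a b) :
    E.D a (E.sub b a) ∧ E.add a (E.sub b a) = b := by
  have h' : ∃ c, E.D a c ∧ E.add a c = b := h
  rw [sub, dif_pos h']
  exact h'.choose_spec

lemma sub_eq {a b c : α} (h : E.le a b) (hD : E.D a c) (he : E.add a c = b) :
    E.sub b a = c := by
  obtain ⟨h1, h2⟩ := E.sub_spec h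
  exact E.cancel h1 hD (h2.trans he.symm)

lemma sub_le {a b : α} (h : E.le a b) : E.le (E.sub b a) b := by
  obtain ⟨h1, h2⟩ := E.sub_spec h
  exact ⟨a, E.comm_def _ _ h1, by rw [← E.comm _ _ h1, h2]⟩

lemma not_le_iff (htot : ∀ a b : α, E.le a b ∨ E.le b a) {a b : α} :
    ¬ E.le b a ↔ (E.le a b ∧ a ≠ b) := by
  constructor
  · intro h
    rcases htot a b with h1 | h1
    · exact ⟨h1, fun he => h (he ▸ E.le_refl a)⟩
    · exact absurd h1 h
  · rintro ⟨h1, h2⟩ h3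
    exact h2 (E.le_antisymm h1 h3)

/-! ### Intervals and lists of intervals -/

def ico (a b : α) : Set α := {x | E.le a x ∧ ¬ E.le b x}

def iSet (l : List (α × α)) : Set α := {x | ∃ p ∈ l, x ∈ E.ico p.1 p.2}

noncomputable def sumL (c : α) (l : List (α × α)) : α :=
  l.foldl (fun s p => E.add s (E.sub p.2 p.1)) c

def ordFrom : α → List (α × α) → Prop
  | _, [] => True
  | c, (p :: t) => E.le c p.1 ∧ E.le p.1 p.2 ∧ p.1 ≠ p.2 ∧ ordFrom p.2 t

@[simp] lemma iSet_nil : E.iSet [] = ∅ := by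
  ext x; simp [iSet]

lemma iSet_cons (p : α × α) (t : List (α × α)) :
    E.iSet (p :: t) = E.ico p.1 p.2 ∪ E.iSet t := by
  ext x
  simp only [iSet, List.mem_cons, Set.mem_setOf_eq, Set.mem_union]
  constructor
  · rintro ⟨q, (rfl | hq), hx⟩
    · exact Or.inl hx
    · exact Or.inr ⟨q, hq, hx⟩
  · rintro (hx | ⟨q, hq, hx⟩)
    · exact ⟨p, Or.inl rfl, hx⟩
    · exact ⟨q, Or.inr hq, hx⟩

@[simp] lemma sumL_nil (c : α) : E.sumL c [] = c := rfl

lemma sumL_cons (c : α) (p : α × α) (t : List (α × α)) :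
    E.sumL c (p :: t) = E.sumL (E.add c (E.sub p.2 p.1)) t := rfl

lemma ordFrom_mono {z z' : α} {l : List (α × α)} (h : E.le z' z)
    (ho : E.ordFrom z l) : E.ordFrom z' l := by
  cases l with
  | nil => trivial
  | cons p t => exact ⟨E.le_trans h ho.1, ho.2⟩

lemma ordFrom_le_fst {z : α} {l : List (α × α)} (ho : E.ordFrom z l) :
    ∀ p ∈ l, E.le z p.1 := by
  induction l generalizing z with
  | nil => intro p hp; simp at hp
  | cons q t ih =>
    intro p hp
    rcases List.mem_cons.1 hp with rfl | hp
    · exact ho.1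
    · exact E.le_trans (E.le_trans ho.1 ho.2.1) (ih ho.2.2.2 p hp)

lemma le_of_mem_iSet {z : α} {l : List (α × α)} (ho : E.ordFrom z l) {x : α}
    (hx : x ∈ E.iSet l) : E.le z x := by
  obtain ⟨p, hp, hx1, -⟩ := hx
  exact E.le_trans (E.ordFrom_le_fst ho p hp) hx1


/-- Main sum lemma: shifting the starting point of the fold. -/
lemma sumL_shift {l : List (α × α)} : ∀ {c : α}, E.ordFrom c l →
    E.D c (E.sumL E.zero l) ∧ E.sumL c l = E.add c (E.sumL E.zero l) := by
  induction l with
  | nil =>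
    intro c _
    exact ⟨(E.add_zero' c).1, ((E.add_zero' c).2).symm⟩
  | cons p t ih =>
    rintro c ⟨hca, hab, hne, hot⟩
    obtain ⟨a, b⟩ := p
    simp only at hca hab hne hot ⊢
    set len := E.sub b a with hlen
    obtain ⟨hDal, heal⟩ := E.sub_spec hab
    have hlenb : E.le len b := E.sub_le hab
    have hot_len : E.ordFrom len t := E.ordFrom_mono hlenb hot
    obtain ⟨hD1, he1⟩ := ih hot_len
    set S := E.sumL E.zero t with hS
    have hsum0 : E.sumL E.zero ((a, b) :: t) = E.add len S := by
      rw [sumL_cons]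
      simp only
      rw [(E.zero_add' len).2, he1]
    obtain ⟨hDbS, -⟩ := ih hot
    have hDabS : E.D (E.add a len) S := heal ▸ hDbS
    have hDa : E.D a (E.add len S) := E.assoc_def₂ _ _ _ hDal hDabS
    have hDc : E.D c (E.add len S) := (E.D_of_le_of_D hca hDa).1
    have hclen : E.D c len ∧ E.le (E.add c len) b :=
      ⟨(E.D_of_le_of_D hca hDal).1, heal ▸ (E.D_of_le_of_D hca hDal).2⟩
    have hot_c : E.ordFrom (E.add c len) t := E.ordFrom_mono hclen.2 hot
    obtain ⟨hD2, he2⟩ := ih hot_c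
    obtain ⟨-, hD3, e3⟩ := E.assoc' hD1 hDc
    constructor
    · rw [hsum0]; exact hDc
    · rw [sumL_cons]
      simp only
      rw [← hlen, he2, hsum0, ← e3]

/-- Existence of the chain of partial sums, with all steps defined. -/
lemma chain_exists {l : List (α × α)} : ∀ {z : α}, E.ordFrom z l →
    ∃ s : ℕ → α, s 0 = z ∧
      (∀ i (h : i < l.length), E.D (s i) (E.sub (l[i].2) (l[i].1)) ∧
        s (i + 1) = E.add (s i) (E.sub (l[i].2) (l[i].1))) ∧
      s l.length = E.sumL z l := by
  induction l with
  | nil =>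
    intro z _
    exact ⟨fun _ => z, rfl, fun i h => by simp at h, rfl⟩
  | cons p t ih =>
    rintro z ⟨hza, hab, hne, hot⟩
    obtain ⟨a, b⟩ := p
    simp only at hza hab hne hot
    set len := E.sub b a with hlen
    obtain ⟨hDal, heal⟩ := E.sub_spec hab
    have hDzl : E.D z len := (E.D_of_le_of_D hza hDal).1
    have hzb : E.le (E.add z len) b := heal ▸ (E.D_of_le_of_D hza hDal).2
    have hot' : E.ordFrom (E.add z len) t := E.ordFrom_mono hzb hot
    obtain ⟨s', hs'0, hs'step, hs'last⟩ := ih hot'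
    refine ⟨fun i => Nat.rec z (fun j _ => s' j) i, rfl, ?_, ?_⟩
    · intro i h
      cases i with
      | zero =>
        simp only [List.getElem_cons_zero]
        exact ⟨hDzl, hs'0⟩
      | succ j =>
        have hj : j < t.length := by simpa using h
        simp only [List.getElem_cons_succ]
        exact hs'step j hj
    · simp only [List.length_cons]
      rw [hs'last, sumL_cons]

/-- The cons formula for sums starting at zero. -/
lemma sumL_cons0 {z a b : α} {t : List (α × α)} (ho : E.ordFrom z ((a, b) :: t)) :
    E.D (E.sub b a) (E.sumL E.zero t) ∧
      E.sumL E.zero ((a, b) :: t) = E.add (E.sub b a) (E.sumL E.zero t) := by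
  obtain ⟨-, hab, -, hot⟩ := ho
  have hlenb : E.le (E.sub b a) b := E.sub_le hab
  have hot' : E.ordFrom (E.sub b a) t := E.ordFrom_mono hlenb hot
  obtain ⟨hD, he⟩ := E.sumL_shift hot'
  refine ⟨hD, ?_⟩
  rw [sumL_cons]
  simp only
  rw [(E.zero_add' _).2, he]


@[simp] lemma mem_ico {a b x : α} : x ∈ E.ico a b ↔ E.le a x ∧ ¬ E.le b x := Iff.rfl

lemma self_mem_ico {a b : α} (hab : E.le a b) (hne : a ≠ b) : a ∈ E.ico a b :=
  ⟨E.le_refl a, fun h => hne (E.le_antisymm hab h)⟩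

lemma ico_eq_empty (htot : ∀ a b : α, E.le a b ∨ E.le b a) {a b : α}
    (h : ¬ (E.le a b ∧ a ≠ b)) : E.ico a b = ∅ := by
  ext x
  simp only [mem_ico, Set.mem_empty_iff_false, iff_false, not_and, not_not]
  intro hax
  by_cases hab : E.le a b
  · by_cases hne : a = b
    · exact hne ▸ hax
    · exact absurd ⟨hab, hne⟩ h
  · rcases htot a b with h1 | h1
    · exact absurd h1 hab
    · exact E.le_trans h1 hax

lemma iSet_eq_empty {z : α} {l : List (α × α)} (ho : E.ordFrom z l)
    (h : E.iSet l = ∅) : l = [] := by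
  cases l with
  | nil => rfl
  | cons p t =>
    exfalso
    have : p.1 ∈ E.iSet (p :: t) :=
      ⟨p, List.mem_cons_self, E.self_mem_ico ho.2.1 ho.2.2.1⟩
    rw [h] at this
    exact this

lemma head_mem_iSet {z a b : α} {t : List (α × α)} (ho : E.ordFrom z ((a, b) :: t)) :
    a ∈ E.iSet ((a, b) :: t) :=
  ⟨(a, b), List.mem_cons_self, E.self_mem_ico ho.2.1 ho.2.2.1⟩

lemma head_min {z a b : α} {t : List (α × α)} (ho : E.ordFrom z ((a, b) :: t)) :
    ∀ x ∈ E.iSet ((a, b) :: t), E.le a x := by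
  intro x hx
  have ho' : E.ordFrom a ((a, b) :: t) := ⟨E.le_refl a, ho.2.1, ho.2.2.1, ho.2.2.2⟩
  exact E.le_of_mem_iSet ho' hx

/-- disjoint nonempty intervals are comparable -/
lemma ico_disjoint_ord (htot : ∀ a b : α, E.le a b ∨ E.le b a) {a b c d : α}
    (hab : E.le a b) (hab' : a ≠ b) (hcd : E.le c d) (hcd' : c ≠ d)
    (hdisj : E.ico a b ∩ E.ico c d = ∅) : E.le b c ∨ E.le d a := by
  by_contra h
  push_neg at h
  obtain ⟨hbc, hda⟩ := h
  have hmem : ∀ x, ¬ (x ∈ E.ico a b ∩ E.ico c d) := by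
    rw [Set.eq_empty_iff_forall_notMem] at hdisj; exact hdisj
  by_cases hac : E.le a c
  · refine hmem c ⟨⟨hac, hbc⟩, E.self_mem_ico hcd hcd'⟩
  · have hca : E.le c a := (htot a c).resolve_left hac
    exact hmem a ⟨E.self_mem_ico hab hab', ⟨hca, hda⟩⟩

lemma ico_union_ico {a b c : α} (hab : E.le a b) (hbc : E.le b c) :
    E.ico a b ∪ E.ico b c = E.ico a c := by
  ext x
  simp only [Set.mem_union, mem_ico]
  constructor
  · rintro (⟨h1, h2⟩ | ⟨h1, h2⟩)
    · exact ⟨h1, fun h => h2 (E.le_trans hbc h)⟩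
    · exact ⟨E.le_trans hab h1, h2⟩
  · rintro ⟨h1, h2⟩
    by_cases hbx : E.le b x
    · exact Or.inr ⟨hbx, h2⟩
    · exact Or.inl ⟨h1, hbx⟩

/-- overlapping intervals: the union is an interval -/
lemma ico_overlap (htot : ∀ a b : α, E.le a b ∨ E.le b a) {a b c d : α}
    (hcd : E.le c d) (hcd' : c ≠ d) (hbc : ¬ E.le b c) (hda : ¬ E.le d a) :
    ∃ a' b', (a' = a ∨ a' = c) ∧ E.le a' a ∧ E.le a' c ∧ E.le a' b' ∧ a' ≠ b' ∧
      E.le b b' ∧ E.le d b' ∧ E.ico a b ∪ E.ico c d = E.ico a' b' := by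
  have hcb : E.le c b := (htot b c).resolve_left hbc
  obtain ⟨a', ha'or, ha'a, ha'c⟩ : ∃ a', (a' = a ∨ a' = c) ∧ E.le a' a ∧ E.le a' c := by
    by_cases hac : E.le a c
    · exact ⟨a, Or.inl rfl, E.le_refl a, hac⟩
    · exact ⟨c, Or.inr rfl, (htot a c).resolve_left hac, E.le_refl c⟩
  obtain ⟨b', hb'or, hbb', hdb'⟩ : ∃ b', (b' = b ∨ b' = d) ∧ E.le b b' ∧ E.le d b' := by
    by_cases hbd : E.le b d
    · exact ⟨d, Or.inr rfl, hbd, E.le_refl d⟩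
    · exact ⟨b, Or.inl rfl, E.le_refl b, (htot d b).resolve_right hbd⟩
  have ha'b' : E.le a' b' := E.le_trans ha'c (E.le_trans hcd hdb')
  have hne : a' ≠ b' := by
    intro h
    have h1 : E.le d c := E.le_trans hdb' (h ▸ ha'c)
    exact hcd' (E.le_antisymm hcd h1)
  refine ⟨a', b', ha'or, ha'a, ha'c, ha'b', hne, hbb', hdb', ?_⟩
  ext x
  simp only [Set.mem_union, mem_ico]
  constructor
  · rintro (⟨h1, h2⟩ | ⟨h1, h2⟩)
    · exact ⟨E.le_trans ha'a h1, fun h => h2 (E.le_trans hbb' h)⟩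
    · exact ⟨E.le_trans ha'c h1, fun h => h2 (E.le_trans hdb' h)⟩
  · rintro ⟨h1, h2⟩
    by_cases hbx : E.le b x
    · refine Or.inr ⟨E.le_trans hcb hbx, fun h => ?_⟩
      rcases hb'or with hb | hb
      · exact h2 (hb ▸ hbx)
      · exact h2 (hb ▸ h)
    · by_cases hax : E.le a x
      · exact Or.inl ⟨hax, hbx⟩
      · have hxa : E.le x a := (htot a x).resolve_left hax
        have hcx : E.le c x := by
          rcases ha'or with h | h
          · exact absurd (h ▸ h1) hax
          · exact h ▸ h1
        exact Or.inr ⟨hcx, fun h => hda (E.le_trans h hxa)⟩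


/-- merging the first interval with an adjacent second interval -/
lemma step_merge {z a b : α} {t : List (α × α)} (ho : E.ordFrom z ((a, b) :: t))
    (hb : b ∈ E.iSet t) :
    ∃ b₂ t', t = (b, b₂) :: t' ∧ E.ordFrom z ((a, b₂) :: t') ∧
      E.iSet ((a, b₂) :: t') = E.iSet ((a, b) :: t) ∧
      E.sumL E.zero ((a, b₂) :: t') = E.sumL E.zero ((a, b) :: t) := by
  obtain ⟨hza, hab, hne, hot⟩ := ho
  cases t with
  | nil => simp [iSet] at hb
  | cons q t' =>
    obtain ⟨a₂, b₂⟩ := q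
    obtain ⟨hba₂, ha₂b₂, hne₂, hot'⟩ := hot
    obtain ⟨p, hp, hpx⟩ := hb
    have hord2 : E.ordFrom b ((a₂, b₂) :: t') := ⟨hba₂, ha₂b₂, hne₂, hot'⟩
    have hpb : p.1 = b := by
      have h1 : E.le b p.1 := E.ordFrom_le_fst hord2 p hp
      exact E.le_antisymm hpx.1 h1
    have ha₂ : a₂ = b := by
      rcases List.mem_cons.1 hp with rfl | hp'
      · exact hpb
      · exfalso
        have h1 : E.le b₂ p.1 := E.ordFrom_le_fst hot' p hp'
        have h2 : E.le b₂ b := hpb ▸ h1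
        have h3 : E.le a₂ b := E.le_trans ha₂b₂ h2
        have h4 : a₂ = b := E.le_antisymm h3 hba₂
        exact hne₂ (h4.trans (E.le_antisymm h2 (h4 ▸ ha₂b₂)).symm)
    subst ha₂
    -- now the second interval is [b, b₂) with b renamed to a₂... b was eliminated
    have hab₂ : E.le a b₂ := E.le_trans hab ha₂b₂
    have hneab₂ : a ≠ b₂ := by
      intro h
      exact hne (E.le_antisymm hab (E.le_trans ha₂b₂ (h ▸ E.le_refl a)))
    have ho' : E.ordFrom z ((a, b₂) :: t') := ⟨hza, hab₂, hneab₂, hot'⟩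
    refine ⟨b₂, t', rfl, ho', ?_, ?_⟩
    · rw [E.iSet_cons, E.iSet_cons, E.iSet_cons]
      simp only
      rw [← Set.union_assoc, E.ico_union_ico hab ha₂b₂]
    · have hc1 := E.sumL_cons0 ho'
      have hcons2 : E.ordFrom a₂ ((a₂, b₂) :: t') := ⟨E.le_refl a₂, ha₂b₂, hne₂, hot'⟩
      have hc2 := E.sumL_cons0 hcons2
      have hcons3 : E.ordFrom z ((a, a₂) :: (a₂, b₂) :: t') :=
        ⟨hza, hab, hne, E.le_refl a₂, ha₂b₂, hne₂, hot'⟩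
      have hc3 := E.sumL_cons0 hcons3
      obtain ⟨hDal, heal⟩ := E.sub_spec hab
      obtain ⟨hDbl, hebl⟩ := E.sub_spec ha₂b₂
      have hD12' : E.D (E.add a (E.sub a₂ a)) (E.sub b₂ a₂) := by rw [heal]; exact hDbl
      have hD12 : E.D (E.sub a₂ a) (E.sub b₂ a₂) := E.assoc_def₁ _ _ _ hDal hD12'
      have hDa12 : E.D a (E.add (E.sub a₂ a) (E.sub b₂ a₂)) :=
        E.assoc_def₂ _ _ _ hDal hD12'
      have he12 : E.add a (E.add (E.sub a₂ a) (E.sub b₂ a₂)) = b₂ := by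
        rw [← E.assoc _ _ _ hDal hD12', heal, hebl]
      have hsplit : E.sub b₂ a = E.add (E.sub a₂ a) (E.sub b₂ a₂) :=
        E.sub_eq hab₂ hDa12 he12
      rw [hc1.2, hc3.2, hc2.2, hsplit]
      have hD' : E.D (E.add (E.sub a₂ a) (E.sub b₂ a₂)) (E.sumL E.zero t') := by
        rw [← hsplit]; exact hc1.1
      exact E.assoc _ _ _ hD12 hD'

/-- well-definedness: two ordered representations of the same set have equal sums -/
lemma sum_well_defined (htot : ∀ a b : α, E.le a b ∨ E.le b a) :
    ∀ N (l₁ l₂ : List (α × α)), l₁.length + l₂.length ≤ N →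
      E.ordFrom E.zero l₁ → E.ordFrom E.zero l₂ → E.iSet l₁ = E.iSet l₂ →
      E.sumL E.zero l₁ = E.sumL E.zero l₂ := by
  intro N
  induction N with
  | zero =>
    intro l₁ l₂ hlen h1 h2 hset
    have e1 : l₁ = [] := List.eq_nil_of_length_eq_zero (by omega)
    have e2 : l₂ = [] := List.eq_nil_of_length_eq_zero (by omega)
    rw [e1, e2]
  | succ n ih =>
    intro l₁ l₂ hlen h1 h2 hset
    cases l₁ with
    | nil =>
      have : l₂ = [] := E.iSet_eq_empty h2 (by rw [← hset, E.iSet_nil])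
      rw [this]
    | cons p t₁ =>
      cases l₂ with
      | nil =>
        have : p :: t₁ = [] := E.iSet_eq_empty h1 (by rw [hset, E.iSet_nil])
        simp at this
      | cons q t₂ =>
        obtain ⟨a, b⟩ := p
        obtain ⟨c, d⟩ := q
        have hac : a = c := by
          have h3 : E.le a c := E.head_min h1 c (by rw [hset]; exact E.head_mem_iSet h2)
          have h4 : E.le c a := E.head_min h2 a (by rw [← hset]; exact E.head_mem_iSet h1)
          exact E.le_antisymm h3 h4
        subst hac
        by_cases hbd : b = d
        · subst hbd
          have htails : E.iSet t₁ = E.iSet t₂ := by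
            ext x
            constructor
            · intro hx
              have hbx : E.le b x := E.le_of_mem_iSet h1.2.2.2 hx
              have hx1 : x ∈ E.iSet ((a, b) :: t₂) := by
                rw [← hset, E.iSet_cons]
                exact Or.inr hx
              rw [E.iSet_cons] at hx1
              rcases hx1 with hx1 | hx1
              · exact absurd hbx hx1.2
              · exact hx1
            · intro hx
              have hbx : E.le b x := E.le_of_mem_iSet h2.2.2.2 hx
              have hx1 : x ∈ E.iSet ((a, b) :: t₁) := by
                rw [hset, E.iSet_cons]
                exact Or.inr hx
              rw [E.iSet_cons] at hx1
              rcases hx1 with hx1 | hx1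
              · exact absurd hbx hx1.2
              · exact hx1
          have hrec := ih t₁ t₂ (by simp only [List.length_cons] at hlen; omega)
            (E.ordFrom_mono (E.zero_le b) h1.2.2.2)
            (E.ordFrom_mono (E.zero_le b) h2.2.2.2) htails
          rw [(E.sumL_cons0 h1).2, (E.sumL_cons0 h2).2, hrec]
        · rcases htot b d with hbd' | hbd'
          · -- b < d: merge in l₁
            have hbmem : b ∈ E.iSet t₁ := by
              have h3 : b ∈ E.iSet ((a, d) :: t₂) := by
                rw [E.iSet_cons]
                exact Or.inl ⟨h1.2.1, fun h => hbd (E.le_antisymm hbd' h)⟩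
              rw [← hset, E.iSet_cons] at h3
              rcases h3 with h3 | h3
              · exact absurd (E.le_refl b) h3.2
              · exact h3
            obtain ⟨b₂, t', rfl, ho', hset', hsum'⟩ := E.step_merge h1 hbmem
            have hrec := ih ((a, b₂) :: t') ((a, d) :: t₂)
              (by simp only [List.length_cons] at hlen ⊢; omega)
              ho' h2 (hset'.trans hset)
            rw [← hsum', hrec]
          · -- d < b: merge in l₂
            have hdmem : d ∈ E.iSet t₂ := by
              have h3 : d ∈ E.iSet ((a, b) :: t₁) := by
                rw [E.iSet_cons]
                exact Or.inl ⟨h2.2.1, fun h => hbd (E.le_antisymm h hbd')⟩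
              rw [hset, E.iSet_cons] at h3
              rcases h3 with h3 | h3
              · exact absurd (E.le_refl d) h3.2
              · exact h3
            obtain ⟨d₂, t', rfl, ho', hset', hsum'⟩ := E.step_merge h2 hdmem
            have hrec := ih ((a, b) :: t₁) ((a, d₂) :: t')
              (by simp only [List.length_cons] at hlen ⊢; omega)
              h1 ho' (hset.trans hset'.symm)
            rw [hrec, hsum']


/-- additivity: merging two disjoint ordered lists -/
lemma merge_lists (htot : ∀ a b : α, E.le a b ∨ E.le b a) :
    ∀ N (l₁ l₂ : List (α × α)) (z : α), l₁.length + l₂.length ≤ N →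
      E.ordFrom z l₁ → E.ordFrom z l₂ → E.iSet l₁ ∩ E.iSet l₂ = ∅ →
      ∃ l₃, E.ordFrom z l₃ ∧ E.iSet l₃ = E.iSet l₁ ∪ E.iSet l₂ ∧
        E.D (E.sumL E.zero l₁) (E.sumL E.zero l₂) ∧
        E.sumL E.zero l₃ = E.add (E.sumL E.zero l₁) (E.sumL E.zero l₂) := by
  intro N
  induction N with
  | zero =>
    intro l₁ l₂ z hlen h1 h2 _
    have e1 : l₁ = [] := List.eq_nil_of_length_eq_zero (by omega)
    have e2 : l₂ = [] := List.eq_nil_of_length_eq_zero (by omega)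
    subst e1; subst e2
    exact ⟨[], trivial, by simp, (E.add_zero' E.zero).1, (E.add_zero' E.zero).2.symm⟩
  | succ n ih =>
    intro l₁ l₂ z hlen h1 h2 hdisj
    cases l₁ with
    | nil =>
      refine ⟨l₂, h2, by simp, (E.zero_add' _).1, ?_⟩
      simp only [sumL_nil]
      exact (E.zero_add' _).2.symm
    | cons p t₁ =>
      cases l₂ with
      | nil =>
        refine ⟨p :: t₁, h1, by simp, (E.add_zero' _).1, ?_⟩
        simp only [sumL_nil]
        exact (E.add_zero' _).2.symm
      | cons q t₂ =>
        obtain ⟨a, b⟩ := p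
        obtain ⟨c, d⟩ := q
        obtain ⟨hza, hab, hneab, hot₁⟩ := h1
        obtain ⟨hzc, hcd, hnecd, hot₂⟩ := h2
        have h1' : E.ordFrom z ((a, b) :: t₁) := ⟨hza, hab, hneab, hot₁⟩
        have h2' : E.ordFrom z ((c, d) :: t₂) := ⟨hzc, hcd, hnecd, hot₂⟩
        have hhd : E.ico a b ∩ E.ico c d = ∅ := by
          rw [Set.eq_empty_iff_forall_notMem]
          intro x ⟨hx1, hx2⟩
          have : x ∈ E.iSet ((a, b) :: t₁) ∩ E.iSet ((c, d) :: t₂) := by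
            constructor
            · rw [E.iSet_cons]; exact Or.inl hx1
            · rw [E.iSet_cons]; exact Or.inl hx2
          rw [hdisj] at this
          exact this
        have hdisj' : ∀ (u₁ u₂ : List (α × α)), E.iSet u₁ ⊆ E.iSet ((a, b) :: t₁) →
            E.iSet u₂ ⊆ E.iSet ((c, d) :: t₂) → E.iSet u₁ ∩ E.iSet u₂ = ∅ := by
          intro u₁ u₂ s1 s2
          rw [Set.eq_empty_iff_forall_notMem]
          intro x ⟨hx1, hx2⟩
          have : x ∈ E.iSet ((a, b) :: t₁) ∩ E.iSet ((c, d) :: t₂) := ⟨s1 hx1, s2 hx2⟩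
          rw [hdisj] at this
          exact this
        have htsub₁ : E.iSet t₁ ⊆ E.iSet ((a, b) :: t₁) := by
          rw [E.iSet_cons]; exact Set.subset_union_right
        have htsub₂ : E.iSet t₂ ⊆ E.iSet ((c, d) :: t₂) := by
          rw [E.iSet_cons]; exact Set.subset_union_right
        rcases E.ico_disjoint_ord htot hab hneab hcd hnecd hhd with hbc | hda
        · -- [a,b) comes first
          have hol₂ : E.ordFrom b ((c, d) :: t₂) := ⟨hbc, hcd, hnecd, hot₂⟩
          obtain ⟨l₃', ho₃, hs₃, hD₃, he₃⟩ := ih t₁ ((c, d) :: t₂) b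
            (by simp only [List.length_cons] at hlen ⊢; omega) hot₁ hol₂
            (hdisj' t₁ ((c, d) :: t₂) htsub₁ (fun _ h => h))
          have ho₄ : E.ordFrom z ((a, b) :: l₃') := ⟨hza, hab, hneab, ho₃⟩
          have hc0 := E.sumL_cons0 ho₄
          have hc1 := E.sumL_cons0 h1'
          have hX : E.D (E.sub b a) (E.add (E.sumL E.zero t₁)
              (E.sumL E.zero ((c, d) :: t₂))) := by
            rw [← he₃]; exact hc0.1
          obtain ⟨-, hD5, e5⟩ := E.assoc' hD₃ hX
          refine ⟨(a, b) :: l₃', ho₄, ?_, ?_, ?_⟩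
          · simp only [E.iSet_cons, hs₃]
            ext x
            simp only [Set.mem_union]
            tauto
          · rw [hc1.2]; exact hD5
          · rw [hc0.2, he₃, hc1.2, ← e5]
        · -- [c,d) comes first
          have hol₁ : E.ordFrom d ((a, b) :: t₁) := ⟨hda, hab, hneab, hot₁⟩
          obtain ⟨l₃', ho₃, hs₃, hD₃, he₃⟩ := ih ((a, b) :: t₁) t₂ d
            (by simp only [List.length_cons] at hlen ⊢; omega) hol₁ hot₂
            (hdisj' ((a, b) :: t₁) t₂ (fun _ h => h) htsub₂)
          have ho₄ : E.ordFrom z ((c, d) :: l₃') := ⟨hzc, hcd, hnecd, ho₃⟩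
          have hc0 := E.sumL_cons0 ho₄
          have hc2 := E.sumL_cons0 h2'
          have hX : E.D (E.sub d c) (E.add (E.sumL E.zero ((a, b) :: t₁))
              (E.sumL E.zero t₂)) := by
            rw [← he₃]; exact hc0.1
          obtain ⟨-, hD5, e5⟩ := E.swap hD₃ hX
          refine ⟨(c, d) :: l₃', ho₄, ?_, ?_, ?_⟩
          · simp only [E.iSet_cons, hs₃]
            ext x
            simp only [Set.mem_union]
            tauto
          · rw [hc2.2]; exact hD5
          · rw [hc0.2, he₃, hc2.2, e5]

/-- inserting one nonempty interval into an ordered list -/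
lemma insert_ico (htot : ∀ a b : α, E.le a b ∨ E.le b a) :
    ∀ (l : List (α × α)) {z a b : α}, E.ordFrom z l → E.le z a → E.le a b → a ≠ b →
      ∃ l', E.ordFrom z l' ∧ E.iSet l' = E.iSet l ∪ E.ico a b := by
  intro l
  induction l with
  | nil =>
    intro z a b _ hza hab hne
    exact ⟨[(a, b)], ⟨hza, hab, hne, trivial⟩, by rw [E.iSet_cons]; simp⟩
  | cons q t ih =>
    intro z a b ho hza hab hne
    obtain ⟨c, d⟩ := q
    obtain ⟨hzc, hcd, hnecd, hot⟩ := ho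
    by_cases hbc : E.le b c
    · refine ⟨(a, b) :: (c, d) :: t, ⟨hza, hab, hne, hbc, hcd, hnecd, hot⟩, ?_⟩
      simp only [E.iSet_cons]
      ext x
      simp only [Set.mem_union]
      tauto
    · by_cases hda : E.le d a
      · obtain ⟨l'', H1, H2⟩ := ih hot hda hab hne
        refine ⟨(c, d) :: l'', ⟨hzc, hcd, hnecd, H1⟩, ?_⟩
        rw [E.iSet_cons, H2, E.iSet_cons, Set.union_assoc]
      · -- overlap
        obtain ⟨a', b', ha'or, ha'a, ha'c, ha'b', hne', hbb', hdb', hU⟩ :=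
          E.ico_overlap htot hcd hnecd hbc hda
        have ha'd : E.le a' d := E.le_trans ha'c hcd
        have hot' : E.ordFrom a' t := E.ordFrom_mono ha'd hot
        obtain ⟨l'', H1, H2⟩ := ih hot' (E.le_refl a') ha'b' hne'
        have hza' : E.le z a' := by
          rcases ha'or with h | h
          · exact h ▸ hza
          · exact h ▸ hzc
        refine ⟨l'', E.ordFrom_mono hza' H1, ?_⟩
        rw [H2, E.iSet_cons, ← hU]
        ext x
        simp only [Set.mem_union]
        tauto

/-- every finite union of intervals has an ordered representation -/
lemma normalize (htot : ∀ a b : α, E.le a b ∨ E.le b a) :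
    ∀ L : List (α × α), ∃ l, E.ordFrom E.zero l ∧ E.iSet l = E.iSet L := by
  intro L
  induction L with
  | nil => exact ⟨[], trivial, rfl⟩
  | cons q t ih =>
    obtain ⟨l', h1, h2⟩ := ih
    obtain ⟨a, b⟩ := q
    by_cases hs : E.le a b ∧ a ≠ b
    · obtain ⟨l'', H1, H2⟩ := E.insert_ico htot l' h1 (E.zero_le a) hs.1 hs.2
      refine ⟨l'', H1, ?_⟩
      rw [H2, h2, E.iSet_cons]
      ext x
      simp only [Set.mem_union]
      tauto
    · refine ⟨l', h1, ?_⟩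
      rw [h2, E.iSet_cons]
      simp only
      rw [E.ico_eq_empty htot hs, Set.empty_union]


lemma ordFrom_ofFn : ∀ {n : ℕ} (f : Fin n → α × α) (z : α),
    (∀ i, E.le z (f i).1) → (∀ i, E.le (f i).1 (f i).2 ∧ (f i).1 ≠ (f i).2) →
    (∀ i j, i < j → E.le (f i).2 (f j).1) →
    E.ordFrom z (List.ofFn f) := by
  intro n
  induction n with
  | zero => intro f z _ _ _; rw [List.ofFn_zero]; trivial
  | succ m ih =>
    intro f z h0 h1 h2
    rw [List.ofFn_succ]
    exact ⟨h0 0, (h1 0).1, (h1 0).2,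
      ih (fun i => f i.succ) (f 0).2
        (fun i => h2 0 i.succ (Fin.succ_pos i))
        (fun i => h1 i.succ)
        (fun i j hij => h2 i.succ j.succ (by simpa using hij))⟩

end EffectAlgebra

/-- for a totally ordered MV-effect algebra `M`, on the algebra of finite
unions of half-open intervals `[a,b)` of `M`, the map sending an ordered disjoint union
`[a₁,b₁) ∪̇ ⋯ ∪̇ [aₙ,bₙ)` (with `a₁ < b₁ ≤ a₂ < b₂ ≤ ⋯`) to `(b₁ ⊖ a₁) ⊕ ⋯ ⊕ (bₙ ⊖ aₙ)`
is a well-defined surjective morphism of effect algebras onto `M`. -/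
theorem stmt18 {α : Type*} (E : EffectAlgebra α)
    (htot : ∀ a b : α, E.le a b ∨ E.le b a) :
    let Ico : α → α → Set α := fun a b => {x | E.le a x ∧ ¬ E.le b x}
    let F : Set (Set α) := {S | ∃ (n : ℕ) (a b : Fin n → α), S = ⋃ i, Ico (a i) (b i)}
    ∃ φ : Set α → α,
      -- defining formula on ordered disjoint representations
      (∀ (n : ℕ) (a b : Fin n → α),
        (∀ i, E.le (a i) (b i) ∧ a i ≠ b i) →
        (∀ i j : Fin n, i < j → E.le (b i) (a j)) →
        ∃ s : Fin (n + 1) → α, s 0 = E.zero ∧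
          (∀ i : Fin n, E.D (s i.castSucc) (E.sub (b i) (a i)) ∧
            s i.succ = E.add (s i.castSucc) (E.sub (b i) (a i))) ∧
          φ (⋃ i, Ico (a i) (b i)) = s (Fin.last n)) ∧
      -- morphism: preserves the unit (the top of the interval algebra is [0,1))
      φ (Ico E.zero E.one) = E.one ∧
      -- morphism: preserves ⊕ (disjoint union)
      (∀ S ∈ F, ∀ T ∈ F, S ∩ T = ∅ →
        E.D (φ S) (φ T) ∧ φ (S ∪ T) = E.add (φ S) (φ T)) ∧
      -- surjectivity onto M
      (∀ m : α, ∃ S ∈ F, φ S = m) := by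
  intro Ico F
  classical
  have hIco : ∀ a b : α, Ico a b = E.ico a b := fun _ _ => rfl
  have hUnion : ∀ (n : ℕ) (a b : Fin n → α),
      (⋃ i, Ico (a i) (b i)) = E.iSet (List.ofFn (fun i => (a i, b i))) := by
    intro n a b
    ext x
    simp only [Set.mem_iUnion, EffectAlgebra.iSet, Set.mem_setOf_eq, List.mem_ofFn]
    constructor
    · rintro ⟨i, hx⟩
      exact ⟨(a i, b i), ⟨i, rfl⟩, hx⟩
    · rintro ⟨p, ⟨i, rfl⟩, hx⟩
      exact ⟨i, hx⟩
  set φ : Set α → α := fun S =>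
    if h : ∃ l, E.ordFrom E.zero l ∧ E.iSet l = S then E.sumL E.zero h.choose
    else E.zero with hφ
  have phi_eq : ∀ (l : List (α × α)) (S : Set α), E.ordFrom E.zero l →
      E.iSet l = S → φ S = E.sumL E.zero l := by
    intro l S hl hS
    have hex : ∃ l', E.ordFrom E.zero l' ∧ E.iSet l' = S := ⟨l, hl, hS⟩
    simp only [hφ]
    rw [dif_pos hex]
    exact E.sum_well_defined htot (hex.choose.length + l.length) _ _ le_rfl
      hex.choose_spec.1 hl (by rw [hex.choose_spec.2, hS])
  refine ⟨φ, ?_, ?_, ?_, ?_⟩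
  · -- defining formula
    intro n a b hstrict hord
    set l := List.ofFn (fun i => (a i, b i)) with hl
    have hord0 : E.ordFrom E.zero l :=
      E.ordFrom_ofFn _ _ (fun i => E.zero_le _) (fun i => hstrict i)
        (fun i j hij => hord i j hij)
    obtain ⟨s, hs0, hstep, hlast⟩ := E.chain_exists hord0
    have hlen : l.length = n := List.length_ofFn
    refine ⟨fun i => s i.val, hs0, ?_, ?_⟩
    · intro i
      have hi : i.val < l.length := by rw [hlen]; exact i.isLt
      have hget : l[i.val] = (a i, b i) := by
        simp [hl, List.getElem_ofFn]
      have hh := hstep i.val hi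
      rw [hget] at hh
      exact hh
    · rw [hUnion n a b, phi_eq l _ hord0 rfl]
      have : s n = E.sumL E.zero l := by rw [← hlen]; exact hlast
      exact this.symm
  · -- unit
    by_cases h01 : E.zero = E.one
    · have hempty : E.iSet ([] : List (α × α)) = Ico E.zero E.one := by
        rw [E.iSet_nil]
        ext x
        simp only [hIco, EffectAlgebra.mem_ico, Set.mem_empty_iff_false, false_iff,
          not_and, not_not]
        intro hx
        rw [← h01]
        exact hx
      rw [phi_eq [] _ trivial hempty]
      exact h01
    · have hord : E.ordFrom E.zero [(E.zero, E.one)] :=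
        ⟨E.le_refl _, E.zero_le _, h01, trivial⟩
      have hset : E.iSet [(E.zero, E.one)] = Ico E.zero E.one := by
        rw [E.iSet_cons, E.iSet_nil, Set.union_empty]
        rw [hIco]
      rw [phi_eq _ _ hord hset]
      show E.add E.zero (E.sub E.one E.zero) = E.one
      rw [(E.zero_add' _).2]
      exact E.sub_eq (E.zero_le _) E.D_zero_one (E.zero_add' E.one).2
  · -- additivity
    intro S hS T hT hST
    obtain ⟨nS, aS, bS, rfl⟩ := hS
    obtain ⟨nT, aT, bT, rfl⟩ := hT
    obtain ⟨lS, hlS, hlSset⟩ := E.normalize htot (List.ofFn (fun i => (aS i, bS i)))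
    obtain ⟨lT, hlT, hlTset⟩ := E.normalize htot (List.ofFn (fun i => (aT i, bT i)))
    have hSset : E.iSet lS = ⋃ i, Ico (aS i) (bS i) := by rw [hlSset, ← hUnion]
    have hTset : E.iSet lT = ⋃ i, Ico (aT i) (bT i) := by rw [hlTset, ← hUnion]
    obtain ⟨l₃, h₃o, h₃s, h₃D, h₃e⟩ := E.merge_lists htot (lS.length + lT.length)
      lS lT E.zero le_rfl hlS hlT (by rw [hSset, hTset]; exact hST)
    have eS := phi_eq lS _ hlS hSset
    have eT := phi_eq lT _ hlT hTset
    have eU := phi_eq l₃ _ h₃o (by rw [h₃s, hSset, hTset])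
    constructor
    · rw [eS, eT]; exact h₃D
    · rw [eU, eS, eT]; exact h₃e
  · -- surjectivity
    intro m
    by_cases hm : m = E.zero
    · refine ⟨∅, ⟨0, Fin.elim0, Fin.elim0, by simp⟩, ?_⟩
      rw [phi_eq [] ∅ trivial E.iSet_nil]
      exact hm.symm
    · refine ⟨Ico E.zero m, ⟨1, fun _ => E.zero, fun _ => m, (Set.iUnion_const _).symm⟩, ?_⟩
      have hord : E.ordFrom E.zero [(E.zero, m)] :=
        ⟨E.le_refl _, E.zero_le _, fun h => hm h.symm, trivial⟩
      have hset : E.iSet [(E.zero, m)] = Ico E.zero m := by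
        rw [E.iSet_cons, E.iSet_nil, Set.union_empty]
        rw [hIco]
      rw [phi_eq _ _ hord hset]
      show E.add E.zero (E.sub m E.zero) = m
      rw [(E.zero_add' _).2]
      exact E.sub_eq (E.zero_le _) (E.zero_add' m).1 (E.zero_add' m).2
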